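/- arXiv:2301.12480 — 10 statements merged into one kernel-verified Lean document; each statement's English description precedes it below -/
import Mathlib

section
/- Let H be a nonempty set of Borel probability measures on ℝ and let (f_i)_{i∈I} be a nonempty family of nonincreasing functions f_i : ℝ → [0,1] such that for every i ∈ I, every Q ∈ H, and every α ∈ (0,1), Q({x ∈ ℝ : f_i(x) ≤ α}) ≤ α. Then the pointwise infimum g(x) = inf_{i∈I} f_i(x) also satisfies Q({x ∈ ℝ : g(x) ≤ α}) ≤ α for every Q ∈ H and every α ∈ (0,1). (Hence the infimum of p-variables that are nonincreasing functions of a single observation X is again a p-variable, and a smallest such p-variable exists.) -/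
open MeasureTheory Set

/-- The pointwise infimum of a nonempty family of nonincreasing
p-variables (as functions of a single real observation) is again a p-variable. -/
theorem stmt_0 {I : Type*} [Nonempty I] (H : Set (Measure ℝ)) (hHne : H.Nonempty)
    (hprob : ∀ Q ∈ H, IsProbabilityMeasure Q)
    (f : I → ℝ → ℝ)
    (hanti : ∀ i, Antitone (f i))
    (hrange : ∀ i x, f i x ∈ Icc (0:ℝ) 1)
    (hp : ∀ i, ∀ Q ∈ H, ∀ α ∈ Ioo (0:ℝ) 1, (Q {x | f i x ≤ α}).toReal ≤ α) :
    ∀ Q ∈ H, ∀ α ∈ Ioo (0:ℝ) 1, (Q {x | (⨅ i, f i x) ≤ α}).toReal ≤ α := by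
  intro Q hQ α hα
  haveI : IsProbabilityMeasure Q := hprob Q hQ
  set g : ℝ → ℝ := fun x => ⨅ i, f i x with hgdef
  have hbdd : ∀ x, BddBelow (Set.range fun i => f i x) := by
    intro x
    exact ⟨0, by rintro r ⟨i, rfl⟩; exact (hrange i x).1⟩
  have hganti : Antitone g := by
    intro x y hxy
    exact ciInf_mono (hbdd y) fun i => hanti i hxy
  set S : Set ℝ := {x | g x ≤ α} with hSdef
  have hSmeas : MeasurableSet S := by
    apply Set.OrdConnected.measurableSet
    constructor
    intro x hx y _ z hz
    exact le_trans (hganti hz.1) hx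
  -- key bound: for every α' ∈ (α, 1), Q S ≤ ofReal α'
  have key : ∀ α' ∈ Ioo α 1, (Q S).toReal ≤ α' := by
    intro α' hα'
    have hQS : Q S ≤ ENNReal.ofReal α' := by
      rw [hSmeas.measure_eq_iSup_isCompact]
      refine iSup_le fun K => iSup_le fun hKS => iSup_le fun hK => ?_
      rcases K.eq_empty_or_nonempty with rfl | hKne
      · simp
      · obtain ⟨m, hmK, hmin⟩ := hK.exists_isLeast hKne
        have hmS : m ∈ S := hKS hmK
        have : g m < α' := lt_of_le_of_lt hmS hα'.1
        obtain ⟨i, hi⟩ := exists_lt_of_ciInf_lt this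
        have hsub : K ⊆ {x | f i x ≤ α'} := by
          intro x hx
          exact le_trans (hanti i (hmin hx)) hi.le
        calc Q K ≤ Q {x | f i x ≤ α'} := measure_mono hsub
          _ ≤ ENNReal.ofReal α' := by
              have hb := hp i Q hQ α' ⟨lt_trans hα.1 hα'.1, hα'.2⟩
              have hne : Q {x | f i x ≤ α'} ≠ ⊤ := measure_ne_top Q _
              rw [← ENNReal.ofReal_toReal hne]
              exact ENNReal.ofReal_le_ofReal hb
    calc (Q S).toReal ≤ (ENNReal.ofReal α').toReal :=
          ENNReal.toReal_mono ENNReal.ofReal_ne_top hQS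
      _ = α' := ENNReal.toReal_ofReal (le_of_lt (lt_trans hα.1 hα'.1))
  -- conclude by letting α' ↓ α
  by_contra hcon
  push_neg at hcon
  set r := (Q S).toReal
  have h1 : min ((α + r) / 2) ((α + 1) / 2) ∈ Ioo α 1 := by
    constructor
    · exact lt_min (by linarith) (by linarith [hα.2])
    · exact lt_of_le_of_lt (min_le_right _ _) (by linarith [hα.2])
  have h2 := key _ h1
  have h3 : min ((α + r) / 2) ((α + 1) / 2) < r :=
    lt_of_le_of_lt (min_le_left _ _) (by linarith)
  exact absurd h2 (not_le.mpr h3)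
end

section
/- Let H be a nonempty set of probability measures on a measurable space (Ω, 𝒜) and let P : Ω → ℝ be a measurable function, with left-quantile T^Q_P(α) = inf{x ∈ ℝ : Q({P ≤ x}) ≥ α}. Then P is a precise p-variable for H, i.e. Q({P ≤ α}) ≤ α for all α ∈ (0,1) and Q ∈ H and moreover sup_{Q∈H} Q({P ≤ α}) = α for each α ∈ (0,1), if and only if inf_{Q∈H} T^Q_P(α) = α for all α ∈ (0,1). -/
open MeasureTheory Set

/-- Left-quantile function of a random variable `P` under a measure `Q`:
`T^Q_P(α) = inf {x : Q(P ≤ x) ≥ α}`. -/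
noncomputable def leftQuantile {Ω : Type*} [MeasurableSpace Ω]
    (Q : Measure Ω) (P : Ω → ℝ) (α : ℝ) : ℝ :=
  sInf {x : ℝ | α ≤ (Q {ω | P ω ≤ x}).toReal}

open Filter Topology

/-
Write `F_Q(x) = Q(P ≤ x)`, so that `T_Q(α) = T^Q_P(α)` is the infimum of the level set
`{x | α ≤ F_Q(x)}`. As `F_Q` is monotone, `F_Q(α) ≤ α` on `(0,1)` is equivalent to
`α ≤ T_Q(α)` on `(0,1)`: validity is exactly the lower-bound half of `inf_Q T_Q(α) = α`.
Given validity, the two "no better bound" halves are exchanged by moving `α` slightly: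
if `F_Q(β) > α` for some `β > α` then `T_Q(α) ≤ β`, and if `T_Q(β) < α` for some `β < α`
then `F_Q(α) ≥ β`.
-/

section Quantile

variable {Ω : Type*} [MeasurableSpace Ω] (Q : Measure Ω) (P : Ω → ℝ)

lemma monotone_toReal_measure_le [IsFiniteMeasure Q] :
    Monotone fun x : ℝ => (Q {ω | P ω ≤ x}).toReal :=
  fun _ _ hxy => ENNReal.toReal_mono (measure_ne_top Q _)
    (measure_mono fun _ hω => le_trans hω hxy)

lemma exists_le_toReal_measure_le [IsProbabilityMeasure Q] {α : ℝ} (hα : α < 1) :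
    ∃ x : ℝ, α ≤ (Q {ω | P ω ≤ x}).toReal := by
  have hmono : Monotone fun x : ℝ => {ω | P ω ≤ x} :=
    fun _ _ hxy _ hω => le_trans hω hxy
  have hunion : (⋃ x : ℝ, {ω | P ω ≤ x}) = univ :=
    eq_univ_of_forall fun ω => mem_iUnion.2 ⟨P ω, le_refl (P ω)⟩
  have hlim : Tendsto (fun x : ℝ => (Q {ω | P ω ≤ x}).toReal) atTop (𝓝 1) := by
    have := tendsto_measure_iUnion_atTop (μ := Q) hmono
    rw [hunion, measure_univ] at this
    exact (ENNReal.tendsto_toReal ENNReal.one_ne_top).comp this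
  exact (hlim.eventually_const_le hα).exists

variable {Q P}

/-- The hypothesis `0 ≤ x` covers the case of a level set that is unbounded below, whose `sInf`
is the junk value `0`. -/
lemma leftQuantile_le {α x : ℝ} (hx : 0 ≤ x) (hαx : α ≤ (Q {ω | P ω ≤ x}).toReal) :
    leftQuantile Q P α ≤ x := by
  by_cases hbdd : BddBelow {y : ℝ | α ≤ (Q {ω | P ω ≤ y}).toReal}
  · exact csInf_le hbdd hαx
  · rw [leftQuantile, Real.sInf_of_not_bddBelow hbdd]
    exact hx

lemma le_leftQuantile [IsProbabilityMeasure Q] {α y : ℝ} (hα : α < 1)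
    (h : ∀ x, α ≤ (Q {ω | P ω ≤ x}).toReal → y ≤ x) : y ≤ leftQuantile Q P α :=
  le_csInf (exists_le_toReal_measure_le Q P hα) h

lemma exists_lt_of_leftQuantile_lt [IsProbabilityMeasure Q] {α γ : ℝ} (hα : α < 1)
    (h : leftQuantile Q P α < γ) : ∃ x < γ, α ≤ (Q {ω | P ω ≤ x}).toReal := by
  obtain ⟨x, hx, hxγ⟩ := exists_lt_of_csInf_lt (exists_le_toReal_measure_le Q P hα) h
  exact ⟨x, hxγ, hx⟩

lemma forall_toReal_measure_le_le_iff_forall_le_leftQuantile [IsProbabilityMeasure Q] :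
    (∀ α ∈ Ioo (0:ℝ) 1, (Q {ω | P ω ≤ α}).toReal ≤ α) ↔
      ∀ α ∈ Ioo (0:ℝ) 1, α ≤ leftQuantile Q P α := by
  constructor
  · intro hvalid α hα
    refine le_leftQuantile hα.2 fun x hx => ?_
    by_contra! hxα
    -- Raise `x` into `(0, α)` so that validity applies to it.
    set β := max x (α / 2)
    have hβα : β < α := max_lt hxα (half_lt_self hα.1)
    have hβ : β ∈ Ioo (0:ℝ) 1 := ⟨lt_max_of_lt_right (half_pos hα.1), hβα.trans hα.2⟩
    have := monotone_toReal_measure_le Q P (le_max_left x (α / 2))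
    linarith [hvalid β hβ]
  · intro hquant α hα
    by_contra! hαF
    obtain ⟨β, hαβ, hβ⟩ := exists_between (lt_min hαF hα.2)
    have hβ' : β ∈ Ioo (0:ℝ) 1 := ⟨hα.1.trans hαβ, hβ.trans_le (min_le_right _ _)⟩
    have := leftQuantile_le hα.1.le (hβ.trans_le (min_le_left _ _)).le
    linarith [hquant β hβ']

end Quantile

section Family

variable {Ω : Type*} [MeasurableSpace Ω] {H : Set (Measure Ω)} {P : Ω → ℝ}

lemma le_of_mem_lowerBounds_leftQuantile
    (hlub : ∀ β ∈ Ioo (0:ℝ) 1, IsLUB {r : ℝ | ∃ Q ∈ H, r = (Q {ω | P ω ≤ β}).toReal} β)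
    {α b : ℝ} (hα : α ∈ Ioo (0:ℝ) 1)
    (hb : b ∈ lowerBounds {r : ℝ | ∃ Q ∈ H, r = leftQuantile Q P α}) : b ≤ α := by
  refine le_of_forall_gt fun γ hαγ => ?_
  obtain ⟨β, hαβ, hβ⟩ := exists_between (lt_min hαγ hα.2)
  have hβ' : β ∈ Ioo (0:ℝ) 1 := ⟨hα.1.trans hαβ, hβ.trans_le (min_le_right _ _)⟩
  obtain ⟨_, ⟨Q, hQ, rfl⟩, hαF, -⟩ := (hlub β hβ').exists_between hαβ
  have := leftQuantile_le (hα.1.trans hαβ).le hαF.le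
  linarith [hb ⟨Q, hQ, rfl⟩, min_le_left γ 1]

lemma le_of_mem_upperBounds_toReal_measure_le (hprob : ∀ Q ∈ H, IsProbabilityMeasure Q)
    (hglb : ∀ β ∈ Ioo (0:ℝ) 1, IsGLB {r : ℝ | ∃ Q ∈ H, r = leftQuantile Q P β} β)
    {α b : ℝ} (hα : α ∈ Ioo (0:ℝ) 1)
    (hb : b ∈ upperBounds {r : ℝ | ∃ Q ∈ H, r = (Q {ω | P ω ≤ α}).toReal}) : α ≤ b := by
  refine le_of_forall_lt fun c hcα => ?_
  obtain ⟨β, hcβ, hβα⟩ := exists_between (max_lt hcα hα.1)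
  have hβ' : β ∈ Ioo (0:ℝ) 1 := ⟨(le_max_right c 0).trans_lt hcβ, hβα.trans hα.2⟩
  obtain ⟨_, ⟨Q, hQ, rfl⟩, -, hTβ⟩ := (hglb β hβ').exists_between hβα
  have := hprob Q hQ
  obtain ⟨x, hxα, hβF⟩ := exists_lt_of_leftQuantile_lt hβ'.2 hTβ
  have := monotone_toReal_measure_le Q P hxα.le
  linarith [hb ⟨Q, hQ, rfl⟩, le_max_left c 0]

end Family

theorem stmt_2_general {Ω : Type*} [MeasurableSpace Ω] (H : Set (Measure Ω))
    (hprob : ∀ Q ∈ H, IsProbabilityMeasure Q)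
    (P : Ω → ℝ) :
    ((∀ Q ∈ H, ∀ α ∈ Ioo (0:ℝ) 1, (Q {ω | P ω ≤ α}).toReal ≤ α) ∧
      (∀ α ∈ Ioo (0:ℝ) 1,
        IsLUB {r : ℝ | ∃ Q ∈ H, r = (Q {ω | P ω ≤ α}).toReal} α)) ↔
      (∀ α ∈ Ioo (0:ℝ) 1,
        IsGLB {r : ℝ | ∃ Q ∈ H, r = leftQuantile Q P α} α) := by
  have hvalid_iff : (∀ Q ∈ H, ∀ α ∈ Ioo (0:ℝ) 1, (Q {ω | P ω ≤ α}).toReal ≤ α) ↔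
      ∀ Q ∈ H, ∀ α ∈ Ioo (0:ℝ) 1, α ≤ leftQuantile Q P α :=
    forall₂_congr fun Q hQ => have := hprob Q hQ
      forall_toReal_measure_le_le_iff_forall_le_leftQuantile
  constructor
  · rintro ⟨hvalid, hlub⟩ α hα
    refine ⟨?_, fun b hb => le_of_mem_lowerBounds_leftQuantile hlub hα hb⟩
    rintro _ ⟨Q, hQ, rfl⟩
    exact hvalid_iff.1 hvalid Q hQ α hα
  · intro hglb
    have hvalid := hvalid_iff.2 fun Q hQ α hα => (hglb α hα).1 ⟨Q, hQ, rfl⟩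
    refine ⟨hvalid, fun α hα => ⟨?_, fun b hb =>
      le_of_mem_upperBounds_toReal_measure_le hprob hglb hα hb⟩⟩
    rintro _ ⟨Q, hQ, rfl⟩
    exact hvalid Q hQ α hα

/-- `P` is a precise p-variable for `H` (valid and
`sup_{Q ∈ H} Q(P ≤ α) = α` for each `α ∈ (0,1)`) iff
`inf_{Q ∈ H} T^Q_P(α) = α` for all `α ∈ (0,1)`. -/
theorem stmt_2 {Ω : Type*} [MeasurableSpace Ω] (H : Set (Measure Ω)) (hHne : H.Nonempty)
    (hprob : ∀ Q ∈ H, IsProbabilityMeasure Q)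
    (P : Ω → ℝ) (hP : Measurable P) :
    ((∀ Q ∈ H, ∀ α ∈ Ioo (0:ℝ) 1, (Q {ω | P ω ≤ α}).toReal ≤ α) ∧
      (∀ α ∈ Ioo (0:ℝ) 1,
        IsLUB {r : ℝ | ∃ Q ∈ H, r = (Q {ω | P ω ≤ α}).toReal} α)) ↔
      (∀ α ∈ Ioo (0:ℝ) 1,
        IsGLB {r : ℝ | ∃ Q ∈ H, r = leftQuantile Q P α} α) :=
  stmt_2_general H hprob P
end

section
/- Let μ ∈ ℝ and σ > 0. For every Borel probability measure Q on ℝ with finite second moment, mean ∫x dQ(x) ≤ μ and variance Var(Q) ≤ σ², and for every α ∈ (0,1), one has Q({x ∈ ℝ : (1 + ((x−μ)₊)²/σ²)^{-1} ≤ α}) ≤ α. That is, P₀(x) = (1 + ((x−μ)₊)²/σ²)^{-1} is a p-variable for the hypothesis H(μ,σ). -/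
open MeasureTheory Set
open scoped ENNReal

/-- Mean of a distribution on ℝ. -/
noncomputable def distMean (Q : Measure ℝ) : ℝ := ∫ x, x ∂Q

/-- Variance of a distribution on ℝ. -/
noncomputable def distVar (Q : Measure ℝ) : ℝ := ∫ x, (x - distMean Q)^2 ∂Q

/-- `H(μ,σ)`: Borel probability measures on ℝ with finite second moment,
mean at most `μ`, and variance at most `σ²`. -/
def MemH (μ σ : ℝ) (Q : Measure ℝ) : Prop :=
  IsProbabilityMeasure Q ∧ Integrable (fun x => x^2) Q ∧
    distMean Q ≤ μ ∧ distVar Q ≤ σ^2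

/-- `P₀(x) = (1 + ((x−μ)₊)²/σ²)⁻¹` is a p-variable for `H(μ,σ)`. -/
theorem stmt_3 (μ σ : ℝ) (hσ : 0 < σ) (Q : Measure ℝ) (hQ : MemH μ σ Q)
    (α : ℝ) (hα : α ∈ Ioo (0:ℝ) 1) :
    (Q {x | (1 + (max (x - μ) 0)^2 / σ^2)⁻¹ ≤ α}).toReal ≤ α := by
  obtain ⟨hprob, hint2, hmean, hvar⟩ := hQ
  obtain ⟨hα0, hα1⟩ := hα
  have hα1' : 0 < 1 - α := by linarith
  set m := distMean Q with hm
  -- the threshold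
  have hsqrtpos : 0 < Real.sqrt ((1 - α) / α) :=
    Real.sqrt_pos.mpr (div_pos hα1' hα0)
  set t : ℝ := σ * Real.sqrt ((1 - α) / α) with htdef
  have htpos : 0 < t := mul_pos hσ hsqrtpos
  set u : ℝ := σ ^ 2 / t with hudef
  have hupos : 0 < u := div_pos (pow_pos hσ 2) htpos
  have h1 : α * t ^ 2 = σ ^ 2 * (1 - α) := by
    have : t ^ 2 = σ ^ 2 * ((1 - α) / α) := by
      rw [htdef, mul_pow, Real.sq_sqrt (le_of_lt (div_pos hα1' hα0))]
    rw [this]; field_simp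
  have h2 : u * t = σ ^ 2 := div_mul_cancel₀ _ (ne_of_gt htpos)
  -- integrability
  have hintx : Integrable (fun x => x) Q := by
    refine (hint2.add (integrable_const 1)).mono' aestronglyMeasurable_id ?_
    filter_upwards with x
    simp only [Real.norm_eq_abs, Pi.add_apply]
    nlinarith [sq_abs x, sq_nonneg (|x| - 1)]
  have hintc : Integrable (fun x => (x - m) ^ 2) Q := by
    have heq : (fun x => (x - m) ^ 2)
        = fun x => x ^ 2 + (-2 * m) * x + m ^ 2 := funext fun x => by ring
    rw [heq]
    exact (hint2.add (hintx.const_mul _)).add (integrable_const _)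
  have hintf : Integrable (fun x => (x - m + u) ^ 2) Q := by
    have heq : (fun x => (x - m + u) ^ 2)
        = fun x => (x - m) ^ 2 + (2 * u) * x + (-2 * u * m + u ^ 2) :=
      funext fun x => by ring
    rw [heq]
    exact (hintc.add (hintx.const_mul _)).add (integrable_const _)
  -- the mean value of the quadratic
  have hEf : ∫ x, (x - m + u) ^ 2 ∂Q = distVar Q + u ^ 2 := by
    have heq : (fun x => (x - m + u) ^ 2)
        = fun x => (x - m) ^ 2 + ((2 * u) * x + (-2 * u * m + u ^ 2)) :=
      funext fun x => by ring
    have hg2 : Integrable (fun x => 2 * u * x) Q := hintx.const_mul _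
    have hg1 : Integrable (fun x => 2 * u * x + (-2 * u * m + u ^ 2)) Q :=
      hg2.add (integrable_const _)
    rw [heq, integral_add hintc hg1, integral_add hg2 (integrable_const _),
      integral_const_mul, integral_const]
    have hQx : ∫ x, x ∂Q = m := rfl
    simp [hQx, distVar, ← hm]
  -- set inclusion
  have hsub : {x | (1 + (max (x - μ) 0) ^ 2 / σ ^ 2)⁻¹ ≤ α}
      ⊆ {x | (t + u) ^ 2 ≤ (x - m + u) ^ 2} := by
    intro x hx
    simp only [mem_setOf_eq] at hx ⊢
    set p : ℝ := max (x - μ) 0 with hpdef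
    have hp0 : 0 ≤ p := le_max_right _ _
    have hpos : 0 < 1 + p ^ 2 / σ ^ 2 := by positivity
    have h1α : 1 ≤ α * (1 + p ^ 2 / σ ^ 2) := by
      have := (inv_le_iff_one_le_mul₀ hpos).mp hx
      linarith [this]
    have hpt2 : t ^ 2 ≤ p ^ 2 := by
      have hσ2 : (0:ℝ) < σ ^ 2 := pow_pos hσ 2
      have : σ ^ 2 * (1 - α) ≤ α * p ^ 2 := by
        have := h1α
        have h' : σ ^ 2 ≤ α * σ ^ 2 + α * p ^ 2 := by
          have := mul_le_mul_of_nonneg_left h1α (le_of_lt hσ2)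
          calc σ ^ 2 = σ ^ 2 * 1 := by ring
            _ ≤ σ ^ 2 * (α * (1 + p ^ 2 / σ ^ 2)) := by
                exact mul_le_mul_of_nonneg_left h1α (le_of_lt hσ2)
            _ = α * σ ^ 2 + α * (σ ^ 2 * (p ^ 2 / σ ^ 2)) := by ring
            _ = α * σ ^ 2 + α * p ^ 2 := by
                rw [mul_div_cancel₀ _ (ne_of_gt hσ2)]
        linarith
      nlinarith [h1]
    have hpt : t ≤ p := by nlinarith
    have hxμ : t ≤ x - μ := by
      rcases max_cases (x - μ) 0 with ⟨h, _⟩ | ⟨h, _⟩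
      · rw [hpdef, h] at hpt; exact hpt
      · rw [hpdef, h] at hpt; linarith
    have hxm : t + u ≤ x - m + u := by
      have : m ≤ μ := hmean
      linarith
    have htu : 0 ≤ t + u := by positivity
    nlinarith
  -- Markov
  have hmarkov := mul_meas_ge_le_integral_of_nonneg
    (ae_of_all Q fun x => sq_nonneg (x - m + u)) hintf ((t + u) ^ 2)
  have hmono : (Q {x | (1 + (max (x - μ) 0) ^ 2 / σ ^ 2)⁻¹ ≤ α}).toReal
      ≤ (Q {x | (t + u) ^ 2 ≤ (x - m + u) ^ 2}).toReal :=
    ENNReal.toReal_mono (measure_ne_top Q _) (measure_mono hsub)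
  have htu2 : 0 < (t + u) ^ 2 := by positivity
  have hbound : (Q {x | (t + u) ^ 2 ≤ (x - m + u) ^ 2}).toReal
      ≤ (σ ^ 2 + u ^ 2) / (t + u) ^ 2 := by
    rw [le_div_iff₀ htu2]
    calc (Q {x | (t + u) ^ 2 ≤ (x - m + u) ^ 2}).toReal * (t + u) ^ 2
        = (t + u) ^ 2 * (Q {x | (t + u) ^ 2 ≤ (x - m + u) ^ 2}).toReal := by ring
      _ ≤ ∫ x, (x - m + u) ^ 2 ∂Q := hmarkov
      _ = distVar Q + u ^ 2 := hEf
      _ ≤ σ ^ 2 + u ^ 2 := by linarith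
  have hkey : (σ ^ 2 + u ^ 2) / (t + u) ^ 2 = α := by
    rw [div_eq_iff (ne_of_gt htu2)]
    have ht2ne : t ^ 2 ≠ 0 := by positivity
    have hmul : (σ ^ 2 + u ^ 2) * t ^ 2 = (α * (t + u) ^ 2) * t ^ 2 := by
      linear_combination (-(t ^ 2) - σ ^ 2) * h1
        + (-2 * α * t ^ 2 + (1 - α) * (u * t + σ ^ 2)) * h2
    exact mul_right_cancel₀ ht2ne hmul
  calc (Q {x | (1 + (max (x - μ) 0) ^ 2 / σ ^ 2)⁻¹ ≤ α}).toReal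
      ≤ (σ ^ 2 + u ^ 2) / (t + u) ^ 2 := le_trans hmono hbound
    _ = α := hkey
end

section
/- Let μ ∈ ℝ and σ > 0. For every α ∈ (0,1) there exists a Borel probability measure Q on ℝ with mean exactly μ and variance exactly σ² such that Q({x ∈ ℝ : (1 + ((x−μ)₊)²/σ²)^{-1} ≤ α}) = α; concretely, the two-point measure giving mass α to the point μ + σ√((1−α)/α) and mass 1−α to the point μ − σ√(α/(1−α)) has these properties. Consequently sup_{Q∈H(μ,σ)} Q({x : (1 + ((x−μ)₊)²/σ²)^{-1} ≤ α}) = α, i.e. P₀ is a precise p-variable for H(μ,σ). -/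
/-! Cantelli's one-sided inequality `Q(X ≥ E X + s) ≤ Var X / (Var X + s²)` bounds the mass of
`{P₀ ≤ α} = [μ + s, ∞)`, where `s = σ√((1−α)/α)`, by `σ² / (σ² + s²) = α` for every `Q ∈ H(μ,σ)`.
The two-point measure is the equality case of Cantelli's inequality: one atom at `μ + s`, the other
at `μ − σ²/s`, with weights making the mean `μ` and the variance `σ²`. -/

open MeasureTheory Set
open scoped ENNReal

/-- The two-point measure giving mass `α` to `μ + σ√((1−α)/α)` and
mass `1−α` to `μ − σ√(α/(1−α))`. -/
noncomputable def twoPointQ (μ σ α : ℝ) : Measure ℝ :=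
  ENNReal.ofReal α • Measure.dirac (μ + σ * Real.sqrt ((1 - α) / α)) +
    ENNReal.ofReal (1 - α) • Measure.dirac (μ - σ * Real.sqrt (α / (1 - α)))

open ProbabilityTheory

section TwoPoint

variable {a b c d : ℝ}

theorem integrable_ofReal_smul_dirac_add_ofReal_smul_dirac (f : ℝ → ℝ) :
    Integrable f (ENNReal.ofReal c • Measure.dirac a + ENNReal.ofReal d • Measure.dirac b) :=
  ((integrable_dirac enorm_lt_top).smul_measure ENNReal.ofReal_ne_top).add_measure
    ((integrable_dirac enorm_lt_top).smul_measure ENNReal.ofReal_ne_top)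

theorem integral_ofReal_smul_dirac_add_ofReal_smul_dirac (f : ℝ → ℝ) (hc : 0 ≤ c) (hd : 0 ≤ d) :
    ∫ x, f x ∂(ENNReal.ofReal c • Measure.dirac a + ENNReal.ofReal d • Measure.dirac b) =
      c * f a + d * f b := by
  rw [integral_add_measure
    ((integrable_dirac enorm_lt_top).smul_measure ENNReal.ofReal_ne_top)
    ((integrable_dirac enorm_lt_top).smul_measure ENNReal.ofReal_ne_top),
    integral_smul_measure, integral_smul_measure, integral_dirac, integral_dirac,
    ENNReal.toReal_ofReal hc, ENNReal.toReal_ofReal hd, smul_eq_mul, smul_eq_mul]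

end TwoPoint

theorem div_add_le_div_add {a b c : ℝ} (ha : 0 ≤ a) (hab : a ≤ b) (hc : 0 < c) :
    a / (a + c) ≤ b / (b + c) := by
  rw [div_le_div_iff₀ (by linarith) (by linarith)]
  nlinarith

theorem measureReal_ge_integral_add_le_variance_div {Ω : Type*} [MeasurableSpace Ω]
    {P : Measure Ω} [IsProbabilityMeasure P] {X : Ω → ℝ} (hX : MemLp X 2 P) {s : ℝ}
    (hs : 0 < s) :
    P.real {ω | P[X] + s ≤ X ω} ≤ Var[X; P] / (Var[X; P] + s ^ 2) := by
  obtain ⟨V, hV_def⟩ : ∃ V, V = Var[X; P] := ⟨_, rfl⟩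
  obtain ⟨p, hp_def⟩ : ∃ p, p = P.real {ω | P[X] + s ≤ X ω} := ⟨_, rfl⟩
  rw [← hV_def, ← hp_def]
  -- Markov's inequality for `(X - E X + u)²`; `u = Var X / s` is the optimal shift.
  obtain ⟨u, hus⟩ : ∃ u, u * s = V := ⟨V / s, div_mul_cancel₀ V hs.ne'⟩
  have hu : 0 ≤ u := nonneg_of_mul_nonneg_left (hus ▸ hV_def ▸ variance_nonneg X P) hs
  set Y : Ω → ℝ := fun ω => X ω - P[X] + u
  have hX1 : Integrable X P := hX.integrable one_le_two
  have hY : MemLp Y 2 P := (hX.sub (memLp_const _)).add (memLp_const _)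
  have hXm : AEStronglyMeasurable X P := hX.1
  have hY_var : Var[Y; P] = V := by
    rw [hV_def, variance_add_const (by fun_prop), variance_sub_const hXm]
  have hY_mean : P[Y] = u := by
    rw [integral_add (f := fun ω => X ω - P[X]) (hX1.sub (integrable_const _))
      (integrable_const _), integral_sub (f := X) hX1 (integrable_const _)]
    simp
  have hY_sq : P[Y ^ 2] = V + u ^ 2 := by
    linarith [hY_var ▸ hY_mean ▸ variance_eq_sub hY]
  have h_sub : {ω | P[X] + s ≤ X ω} ⊆ {ω | (s + u) ^ 2 ≤ Y ω ^ 2} := by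
    intro ω (hω : P[X] + s ≤ X ω)
    have hY_ge : s + u ≤ Y ω := by simp only [Y]; linarith
    exact pow_le_pow_left₀ (by positivity) hY_ge 2
  have hp : (s + u) ^ 2 * p ≤ V + u ^ 2 := calc
    _ ≤ (s + u) ^ 2 * P.real {ω | (s + u) ^ 2 ≤ Y ω ^ 2} := by
      rw [hp_def]
      gcongr
      exact measure_ne_top _ _
    _ ≤ V + u ^ 2 := hY_sq ▸ mul_meas_ge_le_integral_of_nonneg
      (ae_of_all _ fun ω => sq_nonneg (Y ω)) hY.integrable_sq _
  have key : (V + s ^ 2) * (p * (V + s ^ 2)) ≤ (V + s ^ 2) * V := calc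
    _ = s ^ 2 * ((s + u) ^ 2 * p) := by rw [← hus]; ring
    _ ≤ s ^ 2 * (V + u ^ 2) := by gcongr
    _ = (V + s ^ 2) * V := by rw [← hus]; ring
  have hVs : 0 < V + s ^ 2 := by rw [← hus]; positivity
  rw [le_div_iff₀ hVs]
  exact le_of_mul_le_mul_left key hVs

theorem mul_sqrt_one_sub_div_sq {α : ℝ} (hα₀ : 0 < α) (hα₁ : α ≤ 1) :
    α * √((1 - α) / α) ^ 2 = 1 - α := by
  rw [Real.sq_sqrt (div_nonneg (by linarith) hα₀.le)]
  field_simp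

theorem setOf_inv_one_add_sq_le_inv_one_add_sq {μ σ t : ℝ} (hσ : 0 < σ) (ht : 0 < t) :
    {x : ℝ | (1 + (max (x - μ) 0) ^ 2 / σ ^ 2)⁻¹ ≤ (1 + t ^ 2)⁻¹} = Ici (μ + σ * t) := by
  ext x
  rw [mem_ofPred_eq, mem_Ici, inv_le_inv₀ (by positivity) (by positivity), add_le_add_iff_left,
    le_div_iff₀ (by positivity), ← mul_pow,
    pow_le_pow_iff_left₀ (by positivity) (le_max_right _ _) two_ne_zero, le_max_iff,
    or_iff_left (not_le.2 (by positivity))]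
  constructor <;> intro h <;> linarith

theorem setOf_tail_eq_Ici {μ σ α : ℝ} (hσ : 0 < σ) (hα : α ∈ Ioo (0 : ℝ) 1) :
    {x : ℝ | (1 + (max (x - μ) 0) ^ 2 / σ ^ 2)⁻¹ ≤ α} = Ici (μ + σ * √((1 - α) / α)) := by
  have hα_eq : (1 + √((1 - α) / α) ^ 2)⁻¹ = α :=
    inv_eq_of_mul_eq_one_left (by linarith [mul_sqrt_one_sub_div_sq hα.1 hα.2.le])
  conv_lhs => rw [← hα_eq]
  exact setOf_inv_one_add_sq_le_inv_one_add_sq hσ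
    (Real.sqrt_pos.2 (div_pos (sub_pos.2 hα.2) hα.1))

section TwoPointQ

variable (μ σ : ℝ) {α : ℝ}

theorem isProbabilityMeasure_twoPointQ (hα : α ∈ Icc (0 : ℝ) 1) :
    IsProbabilityMeasure (twoPointQ μ σ α) := by
  constructor
  simp [twoPointQ, ← ENNReal.ofReal_add hα.1 (sub_nonneg.2 hα.2)]

theorem integrable_twoPointQ (f : ℝ → ℝ) : Integrable f (twoPointQ μ σ α) :=
  integrable_ofReal_smul_dirac_add_ofReal_smul_dirac f

theorem integral_twoPointQ (f : ℝ → ℝ) (hα : α ∈ Ioo (0 : ℝ) 1) :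
    ∫ x, f x ∂(twoPointQ μ σ α) = α * f (μ + σ * √((1 - α) / α)) +
      (1 - α) * f (μ - σ * (√((1 - α) / α))⁻¹) := by
  rw [twoPointQ, integral_ofReal_smul_dirac_add_ofReal_smul_dirac f hα.1.le (sub_pos.2 hα.2).le,
    ← Real.sqrt_inv, inv_div]

theorem distMean_twoPointQ (hα : α ∈ Ioo (0 : ℝ) 1) : distMean (twoPointQ μ σ α) = μ := by
  have ht : 0 < √((1 - α) / α) := Real.sqrt_pos.2 (div_pos (sub_pos.2 hα.2) hα.1)
  have hαt := mul_sqrt_one_sub_div_sq hα.1 hα.2.le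
  rw [distMean, integral_twoPointQ μ σ (fun x => x) hα]
  field_simp
  linear_combination σ * hαt

theorem distVar_twoPointQ (hα : α ∈ Ioo (0 : ℝ) 1) : distVar (twoPointQ μ σ α) = σ ^ 2 := by
  have ht : 0 < √((1 - α) / α) := Real.sqrt_pos.2 (div_pos (sub_pos.2 hα.2) hα.1)
  have hαt := mul_sqrt_one_sub_div_sq hα.1 hα.2.le
  rw [distVar, distMean_twoPointQ μ σ hα, integral_twoPointQ μ σ (fun x => (x - μ) ^ 2) hα]
  field_simp
  linear_combination σ ^ 2 * (√((1 - α) / α) ^ 2 - 1) * hαt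

theorem twoPointQ_tail {σ : ℝ} (hσ : 0 < σ) (hα : α ∈ Ioo (0 : ℝ) 1) :
    ((twoPointQ μ σ α) {x | (1 + (max (x - μ) 0) ^ 2 / σ ^ 2)⁻¹ ≤ α}).toReal = α := by
  have ht : 0 < √(α / (1 - α)) := Real.sqrt_pos.2 (div_pos hα.1 (sub_pos.2 hα.2))
  have h_notMem : μ - σ * √(α / (1 - α)) ∉ Ici (μ + σ * √((1 - α) / α)) := by
    rw [mem_Ici, not_le]
    have := Real.sqrt_nonneg ((1 - α) / α)
    nlinarith [mul_pos hσ ht]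
  rw [setOf_tail_eq_Ici hσ hα, twoPointQ, Measure.add_apply, Measure.smul_apply,
    Measure.smul_apply, Measure.dirac_apply_of_mem (mem_Ici.2 le_rfl),
    Measure.dirac_apply' _ measurableSet_Ici, indicator_of_notMem h_notMem]
  simp [hα.1.le]

end TwoPointQ

theorem MemH.tail_le {μ σ α : ℝ} (hσ : 0 < σ) (hα : α ∈ Ioo (0 : ℝ) 1) {Q : Measure ℝ}
    (hQ : MemH μ σ Q) : (Q {x | (1 + (max (x - μ) 0) ^ 2 / σ ^ 2)⁻¹ ≤ α}).toReal ≤ α := by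
  obtain ⟨hQP, hQ2, hmean, hvar⟩ := hQ
  have hX : MemLp id 2 Q := (memLp_two_iff_integrable_sq aestronglyMeasurable_id).2 hQ2
  have hV : Var[id; Q] = distVar Q := variance_eq_integral aemeasurable_id
  set t := √((1 - α) / α)
  have ht : 0 < t := Real.sqrt_pos.2 (div_pos (sub_pos.2 hα.2) hα.1)
  have hαt : α * t ^ 2 = 1 - α := mul_sqrt_one_sub_div_sq hα.1 hα.2.le
  rw [setOf_tail_eq_Ici hσ hα]
  calc Q.real (Ici (μ + σ * t))
      ≤ Q.real {x | Q[id] + σ * t ≤ id x} :=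
        measureReal_mono fun x (hx : μ + σ * t ≤ x) => by
          change distMean Q + σ * t ≤ x
          linarith
    _ ≤ Var[id; Q] / (Var[id; Q] + (σ * t) ^ 2) :=
        measureReal_ge_integral_add_le_variance_div hX (by positivity)
    _ ≤ σ ^ 2 / (σ ^ 2 + (σ * t) ^ 2) :=
        div_add_le_div_add (variance_nonneg _ _) (hV ▸ hvar) (by positivity)
    _ = α := by
      field_simp
      linear_combination -hαt

/-- the two-point measure `twoPointQ μ σ α` has mean exactly `μ`,
variance exactly `σ²`, and puts mass exactly `α` on `{P₀ ≤ α}`; consequently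
`sup_{Q ∈ H(μ,σ)} Q(P₀ ≤ α) = α`, i.e. `P₀` is a precise p-variable for `H(μ,σ)`. -/
theorem stmt_4 (μ σ : ℝ) (hσ : 0 < σ) (α : ℝ) (hα : α ∈ Ioo (0:ℝ) 1) :
    (IsProbabilityMeasure (twoPointQ μ σ α) ∧
      Integrable (fun x => x^2) (twoPointQ μ σ α) ∧
      distMean (twoPointQ μ σ α) = μ ∧
      distVar (twoPointQ μ σ α) = σ^2 ∧
      ((twoPointQ μ σ α) {x | (1 + (max (x - μ) 0)^2 / σ^2)⁻¹ ≤ α}).toReal = α) ∧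
    IsLUB {r : ℝ | ∃ Q : Measure ℝ, MemH μ σ Q ∧
      r = (Q {x | (1 + (max (x - μ) 0)^2 / σ^2)⁻¹ ≤ α}).toReal} α := by
  have hprob := isProbabilityMeasure_twoPointQ μ σ (Ioo_subset_Icc_self hα)
  have hint : Integrable (fun x : ℝ => x ^ 2) (twoPointQ μ σ α) := integrable_twoPointQ μ σ _
  have hmean := distMean_twoPointQ μ σ hα
  have hvar := distVar_twoPointQ μ σ hα
  have htail := twoPointQ_tail μ hσ hα
  refine ⟨⟨hprob, hint, hmean, hvar, htail⟩, ?_, ?_⟩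
  · rintro r ⟨Q, hQ, rfl⟩
    exact hQ.tail_le hσ hα
  · exact fun r hr => hr ⟨_, ⟨hprob, hint, hmean.le, hvar.le⟩, htail.symm⟩
end

section
/- Let μ ∈ ℝ and σ > 0. For every Borel probability measure Q on ℝ with finite second moment, mean ∫x dQ(x) ≤ μ and variance Var(Q) ≤ σ², one has ∫ ((x−μ)₊)² dQ(x) ≤ σ². That is, E₀(x) = ((x−μ)₊)²/σ² is an e-variable for H(μ,σ). -/
open MeasureTheory Set
open scoped ENNReal

/-- for every `Q ∈ H(μ,σ)`, `∫ ((x−μ)₊)² dQ ≤ σ²`, i.e.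
`E₀(x) = ((x−μ)₊)²/σ²` is an e-variable for `H(μ,σ)`. -/
theorem stmt_5 (μ σ : ℝ) (hσ : 0 < σ) (Q : Measure ℝ) (hQ : MemH μ σ Q) :
    ∫ x, (max (x - μ) 0)^2 ∂Q ≤ σ^2 := by
  obtain ⟨hP, hInt2, hm, hv⟩ := hQ
  set m := distMean Q with hmdef
  -- integrability of x
  have hInt1 : Integrable (fun x : ℝ => x) Q := by
    have hbound : Integrable (fun x : ℝ => x^2 + 1) Q := hInt2.add (integrable_const 1)
    refine hbound.mono (measurable_id.aestronglyMeasurable) ?_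
    filter_upwards with x
    have h1 : |x| ≤ x^2 + 1 := by nlinarith [sq_nonneg (|x| - 1), sq_abs x]
    have h2 : (0:ℝ) ≤ x^2 + 1 := by positivity
    simpa [abs_of_nonneg h2] using h1
  have hIntVar : Integrable (fun x : ℝ => (x - m)^2) Q := by
    have : Integrable (fun x : ℝ => x^2 - 2*m*x + m^2) Q :=
      ((hInt2.sub ((hInt1.const_mul (2*m)))).add (integrable_const (m^2)))
    refine this.congr ?_
    filter_upwards with x
    ring
  have hle : ∫ x, (max (x - μ) 0)^2 ∂Q ≤ ∫ x, (x - m)^2 ∂Q := by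
    refine integral_mono_of_nonneg ?_ hIntVar ?_
    · filter_upwards with x; positivity
    · filter_upwards with x
      rcases le_or_gt x μ with h | h
      · have : max (x - μ) 0 = 0 := max_eq_right (by linarith)
        rw [this]; simpa using sq_nonneg (x - m)
      · have hmax : max (x - μ) 0 = x - μ := max_eq_left (by linarith)
        rw [hmax]
        have h1 : 0 ≤ x - μ := by linarith
        have h2 : x - μ ≤ x - m := by linarith
        nlinarith
  calc ∫ x, (max (x - μ) 0)^2 ∂Q ≤ ∫ x, (x - m)^2 ∂Q := hle
    _ ≤ σ^2 := hv
end

section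
/- Let μ ∈ ℝ and σ > 0. For every ε > 0 there exists a Borel probability measure Q on ℝ with mean exactly μ and variance exactly σ² such that ∫ ((x−μ)₊)²/σ² dQ(x) > 1 − ε. Consequently sup_{Q∈H(μ,σ)} ∫ ((x−μ)₊)²/σ² dQ(x) = 1, i.e. E₀(x) = ((x−μ)₊)²/σ² is a precise e-variable for H(μ,σ). -/
/-!
The bound `∫ (x-μ)₊² dQ ≤ σ²` on `H(μ,σ)` is pointwise: when the mean `m` of `Q` is at most
`μ`, `(x-μ)₊² ≤ (x-m)²`, whose integral is the variance. It is approached by the two-point laws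
that attain equality in Cantelli's inequality, putting mass `1/(1+t²)` at `μ + σt` and
`t²/(1+t²)` at `μ - σ/t`: these have mean `μ` and variance `σ²`, and the upper atom alone
contributes `σ²t²/(1+t²) → σ²` as `t → ∞`.
-/

open MeasureTheory Set
open scoped ENNReal

noncomputable def twoPointMeasure (p a b : ℝ) : Measure ℝ :=
  ENNReal.ofReal p • Measure.dirac a + ENNReal.ofReal (1 - p) • Measure.dirac b

section TwoPoint

variable {p : ℝ} (a b : ℝ)

theorem isProbabilityMeasure_twoPointMeasure (hp₀ : 0 ≤ p) (hp₁ : p ≤ 1) :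
    IsProbabilityMeasure (twoPointMeasure p a b) := by
  constructor
  simp [twoPointMeasure, ← ENNReal.ofReal_add hp₀ (sub_nonneg.2 hp₁)]

theorem integrable_twoPointMeasure (f : ℝ → ℝ) : Integrable f (twoPointMeasure p a b) :=
  ((integrable_dirac enorm_lt_top).smul_measure ENNReal.ofReal_ne_top).add_measure
    ((integrable_dirac enorm_lt_top).smul_measure ENNReal.ofReal_ne_top)

theorem integral_twoPointMeasure (hp₀ : 0 ≤ p) (hp₁ : p ≤ 1) (f : ℝ → ℝ) :
    ∫ x, f x ∂twoPointMeasure p a b = p * f a + (1 - p) * f b := by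
  rw [twoPointMeasure, integral_add_measure, integral_smul_measure, integral_smul_measure,
    integral_dirac, integral_dirac, ENNReal.toReal_ofReal hp₀,
    ENNReal.toReal_ofReal (sub_nonneg.2 hp₁), smul_eq_mul, smul_eq_mul]
  all_goals exact (integrable_dirac enorm_lt_top).smul_measure ENNReal.ofReal_ne_top

end TwoPoint

section Extremal

variable (μ σ t : ℝ)

noncomputable def cantelliMeasure : Measure ℝ :=
  twoPointMeasure (1 / (1 + t ^ 2)) (μ + σ * t) (μ - σ / t)

variable {μ σ t}

theorem one_div_one_add_sq_mem_Icc : 1 / (1 + t ^ 2) ∈ Icc (0 : ℝ) 1 :=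
  ⟨by positivity, (div_le_one (by positivity)).2 (by nlinarith)⟩

theorem integral_cantelliMeasure (f : ℝ → ℝ) :
    ∫ x, f x ∂cantelliMeasure μ σ t =
      1 / (1 + t ^ 2) * f (μ + σ * t) + (1 - 1 / (1 + t ^ 2)) * f (μ - σ / t) :=
  integral_twoPointMeasure _ _ one_div_one_add_sq_mem_Icc.1 one_div_one_add_sq_mem_Icc.2 f

instance : IsProbabilityMeasure (cantelliMeasure μ σ t) :=
  isProbabilityMeasure_twoPointMeasure _ _ one_div_one_add_sq_mem_Icc.1
    one_div_one_add_sq_mem_Icc.2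

theorem distMean_cantelliMeasure (ht : t ≠ 0) : distMean (cantelliMeasure μ σ t) = μ := by
  rw [distMean, integral_cantelliMeasure]
  field_simp
  ring

theorem distVar_cantelliMeasure (ht : t ≠ 0) : distVar (cantelliMeasure μ σ t) = σ ^ 2 := by
  rw [distVar, distMean_cantelliMeasure ht, integral_cantelliMeasure]
  field_simp
  ring

theorem integral_sq_max_sub_div_cantelliMeasure (hσ : 0 < σ) (ht : 0 < t) :
    ∫ x, max (x - μ) 0 ^ 2 / σ ^ 2 ∂cantelliMeasure μ σ t = t ^ 2 / (1 + t ^ 2) := by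
  have hupper : max (μ + σ * t - μ) 0 = σ * t := by simp [mul_nonneg hσ.le ht.le]
  have hlower : max (μ - σ / t - μ) 0 = 0 := by simp [div_nonneg hσ.le ht.le]
  rw [integral_cantelliMeasure, hupper, hlower]
  field_simp
  ring

theorem one_sub_lt_integral_cantelliMeasure_inv {ε : ℝ} (hσ : 0 < σ) (hε : 0 < ε) :
    1 - ε < ∫ x, max (x - μ) 0 ^ 2 / σ ^ 2 ∂cantelliMeasure μ σ ε⁻¹ := by
  rw [integral_sq_max_sub_div_cantelliMeasure hσ (inv_pos.2 hε), lt_div_iff₀ (by positivity)]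
  field_simp
  nlinarith [sq_nonneg (ε - 1)]

end Extremal

theorem sq_max_sub_le_sq_sub {x m μ : ℝ} (hm : m ≤ μ) :
    max (x - μ) 0 ^ 2 ≤ (x - m) ^ 2 := by
  rcases le_total x μ with hx | hx
  · simp [hx, sq_nonneg]
  · rw [max_eq_left (sub_nonneg.2 hx)]
    exact pow_le_pow_left₀ (sub_nonneg.2 hx) (by linarith) 2

theorem integral_sq_max_sub_le_distVar {Q : Measure ℝ} [IsFiniteMeasure Q] {μ : ℝ}
    (hQ : Integrable (fun x => x ^ 2) Q) (hm : distMean Q ≤ μ) :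
    ∫ x, max (x - μ) 0 ^ 2 ∂Q ≤ distVar Q := by
  have hid : MemLp (fun x : ℝ => x) 2 Q :=
    (memLp_two_iff_integrable_sq measurable_id.aestronglyMeasurable).2 hQ
  exact integral_mono_of_nonneg (.of_forall fun _ => sq_nonneg _)
    (hid.sub (memLp_const (distMean Q))).integrable_sq
    (.of_forall fun _ => sq_max_sub_le_sq_sub hm)

theorem integral_sq_max_sub_div_le_one {μ σ : ℝ} (hσ : 0 < σ) {Q : Measure ℝ}
    (hQ : MemH μ σ Q) :
    ∫ x, max (x - μ) 0 ^ 2 / σ ^ 2 ∂Q ≤ 1 := by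
  obtain ⟨_, hsq, hmean, hvar⟩ := hQ
  rw [integral_div, div_le_one (by positivity)]
  exact (integral_sq_max_sub_le_distVar hsq hmean).trans hvar

/-- for every `ε > 0` there is `Q` with mean exactly `μ` and variance
exactly `σ²` such that `∫ ((x−μ)₊)²/σ² dQ > 1 − ε`; consequently
`sup_{Q ∈ H(μ,σ)} ∫ ((x−μ)₊)²/σ² dQ = 1`, i.e. `E₀` is a precise e-variable. -/
theorem stmt_6 (μ σ : ℝ) (hσ : 0 < σ) :
    (∀ ε > (0:ℝ), ∃ Q : Measure ℝ, IsProbabilityMeasure Q ∧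
      Integrable (fun x => x^2) Q ∧ distMean Q = μ ∧ distVar Q = σ^2 ∧
      1 - ε < ∫ x, (max (x - μ) 0)^2 / σ^2 ∂Q) ∧
    IsLUB {r : ℝ | ∃ Q : Measure ℝ, MemH μ σ Q ∧
      r = ∫ x, (max (x - μ) 0)^2 / σ^2 ∂Q} 1 := by
  refine ⟨fun ε hε => ⟨cantelliMeasure μ σ ε⁻¹, inferInstance, integrable_twoPointMeasure _ _ _,
    distMean_cantelliMeasure (inv_ne_zero hε.ne'), distVar_cantelliMeasure (inv_ne_zero hε.ne'),
    one_sub_lt_integral_cantelliMeasure_inv hσ hε⟩, ?_, ?_⟩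
  · rintro r ⟨Q, hQ, rfl⟩
    exact integral_sq_max_sub_div_le_one hσ hQ
  · refine fun b hb => le_of_forall_lt fun c hc => ?_
    have hε : 0 < 1 - c := sub_pos.2 hc
    have hQ : MemH μ σ (cantelliMeasure μ σ (1 - c)⁻¹) :=
      ⟨inferInstance, integrable_twoPointMeasure _ _ _,
        (distMean_cantelliMeasure (inv_ne_zero hε.ne')).le,
        (distVar_cantelliMeasure (inv_ne_zero hε.ne')).le⟩
    calc c = 1 - (1 - c) := by ring
      _ < _ := one_sub_lt_integral_cantelliMeasure_inv hσ hε
      _ ≤ b := hb ⟨_, hQ, rfl⟩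
end

section
/- Let μ ∈ ℝ and σ > 0. Let Q be a Borel probability measure on ℝ with finite second moment, mean m = ∫x dQ(x) ≤ μ, variance Var(Q) ≤ σ², and suppose Q is symmetric about its mean, i.e. Q((-∞, m−x]) = Q([m+x, ∞)) for all x ∈ ℝ. Then ∫ 2((x−μ)₊)² dQ(x) ≤ σ². That is, E(x) = 2((x−μ)₊)²/σ² is an e-variable for the hypothesis H_S(μ,σ). -/
open MeasureTheory Set
open scoped ENNReal

/-- A distribution `Q` with mean `m` is symmetric if
`Q((-∞, m−x]) = Q([m+x, ∞))` for all `x`. -/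
def IsSymmetricDist (Q : Measure ℝ) : Prop :=
  ∀ x : ℝ, Q (Iic (distMean Q - x)) = Q (Ici (distMean Q + x))

/-- for every symmetric `Q ∈ H(μ,σ)` (i.e. `Q ∈ H_S(μ,σ)`),
`∫ 2((x−μ)₊)² dQ ≤ σ²`, i.e. `E(x) = 2((x−μ)₊)²/σ²` is an e-variable for `H_S(μ,σ)`. -/
theorem stmt_7 (μ σ : ℝ) (hσ : 0 < σ) (Q : Measure ℝ)
    (hQ : MemH μ σ Q) (hsym : IsSymmetricDist Q) :
    ∫ x, 2 * (max (x - μ) 0)^2 ∂Q ≤ σ^2 := by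
  obtain ⟨hprob, hint2, hmean, hvar⟩ := hQ
  set m : ℝ := distMean Q with hm
  -- integrability of x
  have hint1 : Integrable (fun x : ℝ => x) Q := by
    have h : Integrable (fun x : ℝ => x ^ 2 + 1) Q := hint2.add (integrable_const 1)
    refine h.mono ?_ ?_
    · exact measurable_id.aestronglyMeasurable
    · refine Filter.Eventually.of_forall fun x => ?_
      have h1 : |x| ≤ x ^ 2 + 1 := by nlinarith [abs_nonneg x, sq_abs x, sq_nonneg (|x| - 1)]
      simpa [abs_of_nonneg (by positivity : (0:ℝ) ≤ x ^ 2 + 1)] using h1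
  -- integrability of (x - m)^2
  have hintm : Integrable (fun x : ℝ => (x - m) ^ 2) Q := by
    have : (fun x : ℝ => (x - m) ^ 2) = fun x => x ^ 2 + (-2 * m) * x + m ^ 2 := by
      funext x; ring
    rw [this]
    exact (hint2.add (hint1.const_mul _)).add (integrable_const _)
  -- integrability of the positive parts
  have hcontp : Continuous fun x : ℝ => (max (x - m) 0) ^ 2 :=
    ((continuous_id.sub continuous_const).max continuous_const).pow 2
  have hcontn : Continuous fun x : ℝ => (max (m - x) 0) ^ 2 :=
    ((continuous_const.sub continuous_id).max continuous_const).pow 2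
  have hboundp : ∀ x : ℝ, (max (x - m) 0) ^ 2 ≤ (x - m) ^ 2 := by
    intro x
    rcases le_or_gt (x - m) 0 with h | h
    · simp [max_eq_right h]; positivity
    · simp [max_eq_left h.le]
  have hintp : Integrable (fun x : ℝ => (max (x - m) 0) ^ 2) Q := by
    refine hintm.mono hcontp.aestronglyMeasurable ?_
    refine Filter.Eventually.of_forall fun x => ?_
    simp only [Real.norm_eq_abs]
    rw [abs_of_nonneg (by positivity), abs_of_nonneg (by positivity)]
    exact hboundp x
  have hintn : Integrable (fun x : ℝ => (max (m - x) 0) ^ 2) Q := by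
    refine hintm.mono hcontn.aestronglyMeasurable ?_
    refine Filter.Eventually.of_forall fun x => ?_
    simp only [Real.norm_eq_abs]
    rw [abs_of_nonneg (by positivity), abs_of_nonneg (by positivity)]
    rcases le_or_gt (m - x) 0 with h | h
    · simp [max_eq_right h]; positivity
    · rw [max_eq_left h.le]; nlinarith
  -- reflection map
  have hr : Measurable fun x : ℝ => 2 * m - x := measurable_const.sub measurable_id
  haveI : IsProbabilityMeasure (Q.map fun x : ℝ => 2 * m - x) :=
    Measure.isProbabilityMeasure_map hr.aemeasurable
  have hmap : Q.map (fun x : ℝ => 2 * m - x) = Q := by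
    refine Measure.ext_of_Iic _ _ fun t => ?_
    rw [Measure.map_apply hr measurableSet_Iic]
    have hset : (fun x : ℝ => 2 * m - x) ⁻¹' Iic t = Ici (2 * m - t) := by
      ext x; simp only [mem_preimage, mem_Iic, mem_Ici]; constructor <;> intro h <;> linarith
    rw [hset]
    have := hsym (m - t)
    rw [show m - (m - t) = t by ring, show m + (m - t) = 2 * m - t by ring] at this
    exact this.symm
  -- symmetry of the two halves
  have hkey : ∫ x, (max (m - x) 0) ^ 2 ∂Q = ∫ x, (max (x - m) 0) ^ 2 ∂Q := by
    have h1 := integral_map (μ := Q) hr.aemeasurable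
      (f := fun x : ℝ => (max (x - m) 0) ^ 2)
      (by rw [hmap]; exact hcontp.aestronglyMeasurable)
    rw [hmap] at h1
    calc ∫ x, (max (m - x) 0) ^ 2 ∂Q
        = ∫ x, (fun x : ℝ => (max (x - m) 0) ^ 2) (2 * m - x) ∂Q := by
          congr 1; funext x; simp only; rw [show 2 * m - x - m = m - x by ring]
      _ = ∫ x, (max (x - m) 0) ^ 2 ∂Q := h1.symm
  -- sum of halves is the variance
  have hsum : ∫ x, (max (x - m) 0) ^ 2 ∂Q + ∫ x, (max (m - x) 0) ^ 2 ∂Q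
      = ∫ x, (x - m) ^ 2 ∂Q := by
    rw [← integral_add hintp hintn]
    congr 1
    funext x
    rcases le_or_gt (x - m) 0 with h | h
    · rw [max_eq_right h, max_eq_left (by linarith : (0:ℝ) ≤ m - x)]; ring
    · rw [max_eq_left h.le, max_eq_right (by linarith : m - x ≤ 0)]; ring
  have hhalf : 2 * ∫ x, (max (x - m) 0) ^ 2 ∂Q ≤ σ ^ 2 := by
    have : distVar Q = ∫ x, (x - m) ^ 2 ∂Q := rfl
    nlinarith [hvar, hsum, hkey]
  -- monotonicity in μ
  have hintμ : Integrable (fun x : ℝ => 2 * (max (x - μ) 0) ^ 2) Q := by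
    refine (hintp.const_mul 2).mono ?_ ?_
    · exact (continuous_const.mul
        (((continuous_id.sub continuous_const).max continuous_const).pow 2)).aestronglyMeasurable
    · refine Filter.Eventually.of_forall fun x => ?_
      simp only [Real.norm_eq_abs]
      rw [abs_of_nonneg (by positivity), abs_of_nonneg (by positivity)]
      have h1 : max (x - μ) 0 ≤ max (x - m) 0 :=
        max_le_max (by linarith) le_rfl
      nlinarith [le_max_right (x - μ) 0, le_max_right (x - m) 0]
  have hmono : ∫ x, 2 * (max (x - μ) 0) ^ 2 ∂Q ≤ ∫ x, 2 * (max (x - m) 0) ^ 2 ∂Q := by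
    refine integral_mono hintμ (hintp.const_mul 2) fun x => ?_
    have h1 : max (x - μ) 0 ≤ max (x - m) 0 := max_le_max (by linarith) le_rfl
    nlinarith [le_max_right (x - μ) 0, le_max_right (x - m) 0]
  calc ∫ x, 2 * (max (x - μ) 0) ^ 2 ∂Q ≤ ∫ x, 2 * (max (x - m) 0) ^ 2 ∂Q := hmono
    _ = 2 * ∫ x, (max (x - m) 0) ^ 2 ∂Q := by rw [integral_const_mul]
    _ ≤ σ ^ 2 := hhalf
end

section
/- Let μ ∈ ℝ and σ > 0. There exists no nonincreasing function f : ℝ → [0,1] that is a precise p-variable for H_S(μ,σ); that is, no nonincreasing f satisfies both (i) Q({x : f(x) ≤ α}) ≤ α for all α ∈ (0,1) and all Q ∈ H_S(μ,σ), and (ii) sup_{Q∈H_S(μ,σ)} Q({x : f(x) ≤ α}) = α for all α ∈ (0,1). -/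
open MeasureTheory Set
open scoped ENNReal

lemma distMean_dirac (μ : ℝ) : distMean (Measure.dirac μ) = μ := by
  simp [distMean, integral_dirac]

/-- there is no nonincreasing precise p-variable for `H_S(μ,σ)`. -/
theorem stmt_10 (μ σ : ℝ) (hσ : 0 < σ) :
    ¬ ∃ f : ℝ → ℝ, Antitone f ∧ (∀ x, f x ∈ Icc (0:ℝ) 1) ∧
      (∀ Q : Measure ℝ, MemH μ σ Q → IsSymmetricDist Q → ∀ α ∈ Ioo (0:ℝ) 1,
        (Q {x | f x ≤ α}).toReal ≤ α) ∧
      (∀ α ∈ Ioo (0:ℝ) 1,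
        IsLUB {r : ℝ | ∃ Q : Measure ℝ, MemH μ σ Q ∧ IsSymmetricDist Q ∧
          r = (Q {x | f x ≤ α}).toReal} α) := by
  rintro ⟨f, hf, hf01, hp, hlub⟩
  -- the Dirac measure at μ belongs to H_S(μ,σ)
  have hdmem : MemH μ σ (Measure.dirac μ) := by
    refine ⟨inferInstance, ?_, ?_, ?_⟩
    · exact (integrable_const (μ^2)).congr ((ae_eq_dirac (fun x : ℝ => x^2)).symm)
    · rw [distMean_dirac]
    · have : distVar (Measure.dirac μ) = 0 := by
        simp [distVar, distMean_dirac, integral_dirac]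
      rw [this]; positivity
  have hdsym : IsSymmetricDist (Measure.dirac μ) := by
    intro x
    rw [distMean_dirac, Measure.dirac_apply' _ measurableSet_Iic,
      Measure.dirac_apply' _ measurableSet_Ici]
    by_cases hx : x ≤ 0
    · rw [Set.indicator_of_mem (by simp only [mem_Iic]; linarith),
        Set.indicator_of_mem (by simp only [mem_Ici]; linarith)]
    · push_neg at hx
      rw [Set.indicator_of_notMem (by simp only [mem_Iic, not_le]; linarith),
        Set.indicator_of_notMem (by simp only [mem_Ici, not_le]; linarith)]
  -- f μ = 1
  have hfμ : f μ = 1 := by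
    by_contra h
    have h1 : f μ < 1 := lt_of_le_of_ne (hf01 μ).2 h
    have h0 : (0:ℝ) ≤ f μ := (hf01 μ).1
    have hα : (f μ + 1) / 2 ∈ Ioo (0:ℝ) 1 := ⟨by linarith, by linarith⟩
    have hle := hp (Measure.dirac μ) hdmem hdsym _ hα
    have heq : (Measure.dirac μ) {x | f x ≤ (f μ + 1) / 2} = 1 :=
      Measure.dirac_apply_of_mem (by show f μ ≤ (f μ + 1) / 2; linarith)
    rw [heq] at hle
    simp at hle
    linarith [hα.2]
  -- precision at α = 3/4 fails
  have hα34 : (3/4 : ℝ) ∈ Ioo (0:ℝ) 1 := by norm_num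
  have hub : (3/4 : ℝ) ≤ 1/2 := by
    refine (hlub (3/4) hα34).2 ?_
    rintro r ⟨Q, hQ, hsym, rfl⟩
    haveI : IsProbabilityMeasure Q := hQ.1
    set m := distMean Q with hm
    have hsub : {x | f x ≤ (3/4:ℝ)} ⊆ Ioi m := by
      intro x hx
      simp only [mem_setOf_eq] at hx
      by_contra h
      have hxm : x ≤ m := not_lt.1 h
      have hxμ : x ≤ μ := le_trans hxm hQ.2.2.1
      have := hf hxμ
      rw [hfμ] at this
      linarith
    have h1 : Q (Iic m) = Q (Ici m) := by
      have := hsym 0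
      simpa using this
    have h2 : Q (Iic m) + Q (Ioi m) = 1 := by
      have := measure_add_measure_compl (μ := Q) (s := Iic m) measurableSet_Iic
      simpa [compl_Iic] using this
    have h3 : Q (Ioi m) ≤ Q (Ici m) := measure_mono Ioi_subset_Ici_self
    have hfin : ∀ s : Set ℝ, Q s ≠ ⊤ := fun s => measure_ne_top Q s
    have h2' : (Q (Iic m)).toReal + (Q (Ioi m)).toReal = 1 := by
      rw [← ENNReal.toReal_add (hfin _) (hfin _), h2]; simp
    have h1' : (Q (Iic m)).toReal = (Q (Ici m)).toReal := by rw [h1]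
    have h3' : (Q (Ioi m)).toReal ≤ (Q (Ici m)).toReal :=
      ENNReal.toReal_mono (hfin _) h3
    have hmono : (Q {x | f x ≤ (3/4:ℝ)}).toReal ≤ (Q (Ioi m)).toReal :=
      ENNReal.toReal_mono (hfin _) (measure_mono hsub)
    linarith
  norm_num at hub
end

section
/- Let E be a nonnegative integrable random variable on a probability space (Ω, 𝒜, Q) with 𝔼^Q[E] > 1. Then there exists λ ∈ (0,1) such that 𝔼^Q[log(1 − λ + λE)] > 0. (For each λ ∈ (0,1) the random variable log(1 − λ + λE) is bounded below by log(1−λ) and above by λ(E−1), so its expectation is well defined.) -/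
open MeasureTheory Set Filter Topology

/-- if `E` is a nonnegative integrable random variable with
`𝔼^Q[E] > 1`, then there exists a betting fraction `λ ∈ (0,1)` with strictly
positive expected logarithmic growth `𝔼^Q[log(1 − λ + λE)] > 0`. -/
theorem stmt_18 {Ω : Type*} [MeasurableSpace Ω] (Q : Measure Ω)
    [IsProbabilityMeasure Q] (E : Ω → ℝ) (hE : Integrable E Q)
    (hpos : ∀ ω, 0 ≤ E ω) (hmean : 1 < ∫ ω, E ω ∂Q) :
    ∃ l ∈ Ioo (0:ℝ) 1, 0 < ∫ ω, Real.log (1 - l + l * E ω) ∂Q := by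
  classical
  set a : ℕ → ℝ := fun n => 1 / ((n : ℝ) + 2) with ha_def
  have ha_pos : ∀ n, 0 < a n := by
    intro n; positivity
  have ha_le : ∀ n, a n ≤ 1 / 2 := by
    intro n
    have h2 : (2:ℝ) ≤ (n : ℝ) + 2 := by
      have := Nat.cast_nonneg (α := ℝ) n; linarith
    exact one_div_le_one_div_of_le (by norm_num) h2
  have ha_lt1 : ∀ n, a n < 1 := fun n => lt_of_le_of_lt (ha_le n) (by norm_num)
  have ha_tendsto : Tendsto a atTop (𝓝 0) := by
    apply squeeze_zero (fun n => (ha_pos n).le) (fun n => ?_)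
      tendsto_one_div_add_atTop_nhds_zero_nat
    exact one_div_le_one_div_of_le (by positivity) (by linarith)
  -- denominator bounds
  have hden : ∀ n ω, (1:ℝ)/2 ≤ 1 - a n + a n * E ω := by
    intro n ω
    have := mul_nonneg (ha_pos n).le (hpos ω)
    have := ha_le n
    linarith
  have hdenpos : ∀ n ω, (0:ℝ) < 1 - a n + a n * E ω := fun n ω =>
    lt_of_lt_of_le (by norm_num) (hden n ω)
  -- the auxiliary functions
  set F : ℕ → Ω → ℝ := fun n ω => (E ω - 1) / (1 - a n + a n * E ω) with hF_def
  have hFmeas : ∀ n, AEStronglyMeasurable (F n) Q := by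
    intro n
    exact ((hE.1.aemeasurable.sub aemeasurable_const).div
      ((aemeasurable_const.sub aemeasurable_const).add
        (aemeasurable_const.mul hE.1.aemeasurable))).aestronglyMeasurable
  have hbound_int : Integrable (fun ω => 2 * (E ω + 1)) Q :=
    (hE.add (integrable_const 1)).const_mul 2
  have hFbound : ∀ n ω, ‖F n ω‖ ≤ 2 * (E ω + 1) := by
    intro n ω
    have hd := hden n ω
    have hdp := hdenpos n ω
    rw [hF_def]
    simp only [Real.norm_eq_abs, abs_div, abs_of_pos hdp]
    rw [div_le_iff₀ hdp]
    have h1 : |E ω - 1| ≤ E ω + 1 := by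
      rw [abs_le]; constructor <;> [linarith [hpos ω]; linarith]
    have h2 : E ω + 1 ≤ (2 * (E ω + 1)) * (1/2) := by ring_nf; linarith
    calc |E ω - 1| ≤ E ω + 1 := h1
      _ ≤ (2 * (E ω + 1)) * (1/2) := h2
      _ ≤ (2 * (E ω + 1)) * (1 - a n + a n * E ω) := by
          apply mul_le_mul_of_nonneg_left hd
          have := hpos ω; linarith
  have hFint : ∀ n, Integrable (F n) Q := by
    intro n
    refine hbound_int.mono (hFmeas n) (Filter.Eventually.of_forall fun ω => ?_)
    have h0 : (0:ℝ) ≤ 2 * (E ω + 1) := by linarith [hpos ω]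
    rw [Real.norm_eq_abs, Real.norm_eq_abs, abs_of_nonneg h0]
    exact hFbound n ω
  -- pointwise limit
  have hlim : ∀ ω, Tendsto (fun n => F n ω) atTop (𝓝 (E ω - 1)) := by
    intro ω
    have hd : Tendsto (fun n => 1 - a n + a n * E ω) atTop (𝓝 1) := by
      have : Tendsto (fun n => 1 - a n + a n * E ω) atTop (𝓝 (1 - 0 + 0 * E ω)) :=
        ((tendsto_const_nhds.sub ha_tendsto).add (ha_tendsto.mul tendsto_const_nhds))
      simpa using this
    have : Tendsto (fun n => (E ω - 1) / (1 - a n + a n * E ω)) atTop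
        (𝓝 ((E ω - 1) / 1)) := tendsto_const_nhds.div hd (by norm_num)
    simpa using this
  -- dominated convergence
  have hDCT : Tendsto (fun n => ∫ ω, F n ω ∂Q) atTop (𝓝 (∫ ω, (E ω - 1) ∂Q)) := by
    exact tendsto_integral_of_dominated_convergence _ hFmeas hbound_int
      (fun n => Filter.Eventually.of_forall (hFbound n))
      (Filter.Eventually.of_forall hlim)
  have hmean' : 0 < ∫ ω, (E ω - 1) ∂Q := by
    rw [integral_sub hE (integrable_const 1)]
    simp [measure_univ]
    linarith
  obtain ⟨n, hn⟩ := (hDCT.eventually (eventually_gt_nhds hmean')).exists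
  refine ⟨a n, ⟨ha_pos n, ha_lt1 n⟩, ?_⟩
  -- pointwise log lower bound: a n * F n ω ≤ log(1 - a n + a n * E ω)
  have hptw : ∀ ω, a n * F n ω ≤ Real.log (1 - a n + a n * E ω) := by
    intro ω
    have hdp := hdenpos n ω
    have hlog : 1 - (1 - a n + a n * E ω)⁻¹ ≤ Real.log (1 - a n + a n * E ω) := by
      have h := Real.log_le_sub_one_of_pos (inv_pos.2 hdp)
      rw [Real.log_inv] at h
      linarith
    have heq : a n * F n ω = 1 - (1 - a n + a n * E ω)⁻¹ := by
      rw [hF_def]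
      field_simp
      ring
    rw [heq]; exact hlog
  -- integrability of the log
  have hlogmeas : AEStronglyMeasurable (fun ω => Real.log (1 - a n + a n * E ω)) Q := by
    exact (Real.measurable_log.comp_aemeasurable
      (((aemeasurable_const.sub aemeasurable_const).add
        (aemeasurable_const.mul hE.1.aemeasurable)))).aestronglyMeasurable
  have hupper : ∀ ω, Real.log (1 - a n + a n * E ω) ≤ a n * (E ω - 1) := by
    intro ω
    have h := Real.log_le_sub_one_of_pos (hdenpos n ω)
    linarith
  have hlower : ∀ ω, Real.log (1 - a n) ≤ Real.log (1 - a n + a n * E ω) := by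
    intro ω
    apply Real.log_le_log (by linarith [ha_lt1 n])
    have := mul_nonneg (ha_pos n).le (hpos ω); linarith
  have hlogint : Integrable (fun ω => Real.log (1 - a n + a n * E ω)) Q := by
    apply Integrable.mono (g := fun ω => |Real.log (1 - a n)| + a n * (E ω + 1))
      ((integrable_const _).add ((hE.add (integrable_const 1)).const_mul (a n))) hlogmeas
    apply Filter.Eventually.of_forall
    intro ω
    simp only [Real.norm_eq_abs]
    rw [abs_le]
    have hE1' : (0:ℝ) ≤ a n * (E ω + 1) :=
      mul_nonneg (ha_pos n).le (by linarith [hpos ω])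
    have habs : 0 ≤ |Real.log (1 - a n)| + a n * (E ω + 1) :=
      add_nonneg (abs_nonneg _) hE1'
    constructor
    · have := hlower ω
      have : -(|Real.log (1 - a n)|) ≤ Real.log (1 - a n + a n * E ω) := by
        have h2 := neg_abs_le (Real.log (1 - a n))
        linarith [hlower ω]
      rw [abs_of_nonneg habs]
      linarith
    · rw [abs_of_nonneg habs]
      have := hupper ω
      have h3 : a n * (E ω - 1) ≤ a n * (E ω + 1) :=
        mul_le_mul_of_nonneg_left (by linarith) (ha_pos n).le
      have h4 := abs_nonneg (Real.log (1 - a n))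
      linarith
  calc (0:ℝ) < a n * ∫ ω, F n ω ∂Q := mul_pos (ha_pos n) hn
    _ = ∫ ω, a n * F n ω ∂Q := (integral_const_mul _ _).symm
    _ ≤ ∫ ω, Real.log (1 - a n + a n * E ω) ∂Q :=
        integral_mono ((hFint n).const_mul _) hlogint hptw
end

section
/- Let μ^L ≤ μ^U be real numbers and σ > 0. For every Borel probability measure Q on ℝ with finite second moment, mean m = ∫x dQ(x) satisfying μ^L ≤ m ≤ μ^U, and variance Var(Q) ≤ σ², one has ∫ ( ((x−μ^U)₊)² + ((x−μ^L)₋)² ) dQ(x) ≤ σ². That is, E(x) = ( ((x−μ^U)₊)² + ((x−μ^L)₋)² )/σ² is an e-variable for the two-sided hypothesis H(μ^L, μ^U, σ). -/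
open MeasureTheory Set
open scoped ENNReal

/-- for `μ^L ≤ μ^U` and every `Q` with finite second moment,
mean in `[μ^L, μ^U]` and variance at most `σ²`,
`∫ (((x−μ^U)₊)² + ((x−μ^L)₋)²) dQ ≤ σ²`; i.e.
`E(x) = (((x−μ^U)₊)² + ((x−μ^L)₋)²)/σ²` is an e-variable for the two-sided
hypothesis `H(μ^L, μ^U, σ)`. -/
theorem stmt_19 (μL μU σ : ℝ) (hμ : μL ≤ μU) (hσ : 0 < σ)
    (Q : Measure ℝ) (hprob : IsProbabilityMeasure Q)
    (hint : Integrable (fun x => x^2) Q)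
    (hmeanL : μL ≤ distMean Q) (hmeanU : distMean Q ≤ μU)
    (hvar : distVar Q ≤ σ^2) :
    ∫ x, ((max (x - μU) 0)^2 + (max (μL - x) 0)^2) ∂Q ≤ σ^2 := by
  set m := distMean Q with hm
  have hx : Integrable (fun x : ℝ => x) Q := by
    refine (hint.add (integrable_const 1)).mono' measurable_id.aestronglyMeasurable ?_
    filter_upwards with x
    simp only [Pi.add_apply, Real.norm_eq_abs]
    rcases le_or_gt (|x|) 1 with h | h
    · nlinarith [sq_nonneg x]
    · nlinarith [sq_abs x, abs_nonneg x]
  have hintg : Integrable (fun x : ℝ => (x - m)^2) Q := by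
    have : (fun x : ℝ => (x - m)^2) = fun x => x^2 + ((-2*m) * x + m^2) := by
      funext x; ring
    rw [this]
    exact hint.add ((hx.const_mul _).add (integrable_const _))
  have hmono : ∫ x, ((max (x - μU) 0)^2 + (max (μL - x) 0)^2) ∂Q
      ≤ ∫ x, (x - m)^2 ∂Q := by
    refine integral_mono_of_nonneg ?_ hintg ?_
    · filter_upwards with x
      positivity
    · filter_upwards with x
      rcases le_or_gt x μL with h | h
      · have h1 : max (x - μU) 0 = 0 := max_eq_right (by linarith)
        have h2 : max (μL - x) 0 = μL - x := max_eq_left (by linarith)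
        rw [h1, h2]
        nlinarith
      rcases le_or_gt x μU with h' | h'
      · have h1 : max (x - μU) 0 = 0 := max_eq_right (by linarith)
        have h2 : max (μL - x) 0 = 0 := max_eq_right (by linarith)
        rw [h1, h2]
        nlinarith [sq_nonneg (x - m)]
      · have h1 : max (x - μU) 0 = x - μU := max_eq_left (by linarith)
        have h2 : max (μL - x) 0 = 0 := max_eq_right (by linarith)
        rw [h1, h2]
        nlinarith
  calc _ ≤ ∫ x, (x - m)^2 ∂Q := hmono
    _ = distVar Q := rfl
    _ ≤ σ^2 := hvar
end
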